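/- Let V be a finite-dimensional complex vector space, σ an antilinear involution on V, k an integer, and h : ℂˣ → GL(V) an algebraic representation with σ ∘ h(z) = h(z) ∘ σ for all z ∈ ℂˣ and h(t) = t^k • id for every positive real t. Then V admits a basis consisting of simultaneous eigenvectors: a basis (v_i) such that each v_i lies in some weight space V^{p,q} with p + q = k. In particular, the lattice spanned by such a basis is compatible with the Hodge decomposition, i.e., the basis is partitioned into bases of the individual summands V^{p,q}. -/

import Mathlib

/-!
Expanding the matrix entries of `h z` into monomials writes `h z = ∑ χ_{p,q}(z) • A_{p,q}`, where
the `χ_{p,q}(z) = z ^ p * conj z ^ q` are pairwise distinct characters of `ℂˣ`. Comparing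
coefficients in `h (z * w) = h z * h w` by Artin's linear independence of characters gives
`h z * A_{p,q} = χ_{p,q}(z) • A_{p,q}`, so `A_{p,q}` maps into `V^{p,q}`; since
`∑ A_{p,q} = h 1 = 1`, the weight spaces span `V`, and a basis can be extracted from their union.
Evaluating at `z = 2` shows `p + q = k` for every nonzero weight vector.
-/

/-- The weight space `V^{p,q} = {v | h(z) v = z^p (conj z)^q • v for all z}` of a
representation `h : ℂˣ → GL(V)`. -/
noncomputable def weightSpace {V : Type*} [AddCommGroup V] [Module ℂ V]
    (h : ℂˣ →* (V →ₗ[ℂ] V)ˣ) (p q : ℤ) : Submodule ℂ V :=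
  ⨅ z : ℂˣ, Module.End.eigenspace ((h z : V →ₗ[ℂ] V))
    ((z : ℂ) ^ p * (starRingEnd ℂ (z : ℂ)) ^ q)

/-- A representation `h : ℂˣ → GL(V)` is algebraic if in some basis its matrix entries
are polynomials in `z`, `conj z` and `(z * conj z)⁻¹`. -/
def IsAlgebraicRep {V : Type*} [AddCommGroup V] [Module ℂ V]
    (h : ℂˣ →* (V →ₗ[ℂ] V)ˣ) : Prop :=
  ∃ (n : ℕ) (b : Module.Basis (Fin n) ℂ V) (N : ℕ) (P : Fin n → Fin n → MvPolynomial (Fin 2) ℂ),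
    ∀ (z : ℂˣ) (i j : Fin n),
      LinearMap.toMatrix b b ((h z : V →ₗ[ℂ] V)) i j =
        MvPolynomial.eval ![(z : ℂ), (starRingEnd ℂ) (z : ℂ)] (P i j) *
          ((z : ℂ) * (starRingEnd ℂ) (z : ℂ)) ^ (-(N : ℤ))

open Module

section Characters

variable {G K V ι : Type*} [Monoid G] [Field K] [AddCommGroup V] [Module K V]
  {χ : ι → G →* K} {s : Finset ι}

theorem eq_zero_of_forall_sum_char_smul_eq_zero (hχ : Function.Injective χ) {c : ι → V}
    (H : ∀ g, ∑ i ∈ s, χ i g • c i = 0) : ∀ i ∈ s, c i = 0 := by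
  intro i hi
  rw [← forall_dual_apply_eq_zero_iff K]
  intro φ
  refine linearIndependent_iff'.mp ((linearIndependent_monoidHom G K).comp χ hχ) s
    (fun j => φ (c j)) ?_ i hi
  funext g
  simpa [Finset.sum_apply, mul_comm] using congrArg φ (H g)

theorem mul_eq_char_smul_of_eq_sum_char_smul (hχ : Function.Injective χ)
    {ρ : G →* End K V} {A : ι → End K V} (hρ : ∀ g, ρ g = ∑ i ∈ s, χ i g • A i) (g : G) :
    ∀ i ∈ s, ρ g * A i = χ i g • A i := by
  have hcoeff := eq_zero_of_forall_sum_char_smul_eq_zero hχ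
    (c := fun i => ρ g * A i - χ i g • A i) fun w => by
      calc ∑ i ∈ s, χ i w • (ρ g * A i - χ i g • A i)
          = ρ g * ∑ i ∈ s, χ i w • A i - ∑ i ∈ s, χ i (g * w) • A i := by
            simp only [smul_sub, smul_smul, map_mul, mul_comm, Finset.sum_sub_distrib,
              Finset.mul_sum, mul_smul_comm]
        _ = 0 := by rw [← hρ, ← hρ, map_mul, sub_self]
  exact fun i hi => sub_eq_zero.mp (hcoeff i hi)

theorem iSup_iInf_eigenspace_eq_top_of_eq_sum_char_smul (hχ : Function.Injective χ)
    {ρ : G →* End K V} {A : ι → End K V} (hρ : ∀ g, ρ g = ∑ i ∈ s, χ i g • A i) :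
    ⨆ i ∈ s, ⨅ g, End.eigenspace (ρ g) (χ i g) = ⊤ := by
  refine eq_top_iff.mpr fun v _ => ?_
  have hv : v = ∑ i ∈ s, A i v := by
    simpa using congrArg (· v) (hρ 1)
  rw [hv]
  refine Submodule.sum_mem_biSup fun i hi => Submodule.mem_iInf _ |>.mpr fun g => ?_
  rw [End.mem_eigenspace_iff, ← End.mul_apply,
    mul_eq_char_smul_of_eq_sum_char_smul hχ hρ g i hi, LinearMap.smul_apply]

end Characters

theorem exists_basis_forall_mem_of_iSup_eq_top {K V κ : Type*} [DivisionRing K]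
    [AddCommGroup V] [Module K V] [FiniteDimensional K V] {W : κ → Submodule K V}
    (hW : ⨆ i, W i = ⊤) : ∃ (n : ℕ) (b : Basis (Fin n) K V), ∀ j, ∃ i, b j ∈ W i := by
  rw [Submodule.iSup_eq_span] at hW
  have := Module.Finite.finite_basis (Basis.ofSpan hW.ge)
  refine ⟨_, (Basis.ofSpan hW.ge).reindex (Finite.equivFin _), fun j => ?_⟩
  have hj := Basis.ofSpan_subset hW.ge (Set.mem_range_self ((Finite.equivFin _).symm j))
  rw [Basis.reindex_apply]
  simpa using hj

noncomputable def monomialChar (pq : ℤ × ℤ) : ℂˣ →* ℂ where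
  toFun z := (z : ℂ) ^ pq.1 * starRingEnd ℂ (z : ℂ) ^ pq.2
  map_one' := by simp
  map_mul' z w := by simp only [Units.val_mul, map_mul, mul_zpow]; ring

theorem Complex.two_zpow_injective : Function.Injective fun n : ℤ => (2 : ℂ) ^ n := by
  intro a b hab
  have := congrArg norm hab
  simp only [norm_zpow, Complex.norm_ofNat] at this
  exact zpow_right_injective₀ two_pos (by norm_num) this

theorem Complex.exists_conj_eq_inv_zpow_eq_neg_one {a : ℤ} (ha : a ≠ 0) :
    ∃ z : ℂˣ, starRingEnd ℂ (z : ℂ) = (z : ℂ)⁻¹ ∧ (z : ℂ) ^ a = -1 := by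
  refine ⟨Units.mk0 (Complex.exp (↑(Real.pi / a) * Complex.I)) (Complex.exp_ne_zero _), ?_, ?_⟩
  · simp [← Complex.exp_conj, ← Complex.exp_neg]
  · rw [Units.val_mk0, ← Complex.exp_int_mul]
    convert Complex.exp_pi_mul_I using 2
    push_cast
    field_simp

theorem monomialChar_injective : Function.Injective monomialChar := by
  rintro ⟨p, q⟩ ⟨p', q'⟩ he
  have hchar (z : ℂˣ) : (z : ℂ) ^ p * starRingEnd ℂ (z : ℂ) ^ q
      = (z : ℂ) ^ p' * starRingEnd ℂ (z : ℂ) ^ q' := DFunLike.congr_fun he z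
  have hsum : p + q = p' + q' := Complex.two_zpow_injective <| by
    simpa [map_ofNat, ← zpow_add₀ (two_ne_zero (α := ℂ))] using hchar (Units.mk0 2 two_ne_zero)
  have hdiff : p - q = p' - q' := by
    by_contra hne
    obtain ⟨z, hconj, hz⟩ := Complex.exists_conj_eq_inv_zpow_eq_neg_one (sub_ne_zero.mpr hne)
    have := hchar z
    rw [hconj, inv_zpow', inv_zpow', ← zpow_add₀ z.ne_zero, ← zpow_add₀ z.ne_zero,
      ← sub_eq_add_neg, ← sub_eq_add_neg] at this
    rw [zpow_sub₀ z.ne_zero, this, div_self (zpow_ne_zero _ z.ne_zero)] at hz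
    norm_num at hz
  simp only [Prod.mk.injEq]
  omega

theorem MvPolynomial.eval_mul_zpow_eq_sum_monomialChar (f : MvPolynomial (Fin 2) ℂ) (N : ℕ)
    (z : ℂˣ) :
    eval ![(z : ℂ), starRingEnd ℂ (z : ℂ)] f * ((z : ℂ) * starRingEnd ℂ (z : ℂ)) ^ (-(N : ℤ)) =
      ∑ d ∈ f.support, f.coeff d * monomialChar ((d 0 : ℤ) - N, (d 1 : ℤ) - N) z := by
  have hz : starRingEnd ℂ (z : ℂ) ≠ 0 := by simp
  rw [eval_eq', Finset.sum_mul]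
  refine Finset.sum_congr rfl fun d _ => ?_
  simp only [Fin.prod_univ_two, monomialChar, MonoidHom.coe_mk, OneHom.coe_mk,
    Matrix.cons_val_zero, Matrix.cons_val_one]
  rw [zpow_sub₀ z.ne_zero, zpow_sub₀ hz, zpow_neg, mul_zpow]
  simp only [zpow_natCast]
  field_simp

section Representation

variable {V : Type*} [AddCommGroup V] [Module ℂ V] {h : ℂˣ →* (V →ₗ[ℂ] V)ˣ}

theorem IsAlgebraicRep.exists_eq_sum_monomialChar_smul (halg : IsAlgebraicRep h) :
    ∃ (S : Finset (ℤ × ℤ)) (A : ℤ × ℤ → End ℂ V),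
      ∀ z, (h z : End ℂ V) = ∑ pq ∈ S, monomialChar pq z • A pq := by
  classical
  obtain ⟨n, b, N, P, hP⟩ := halg
  let supp (ij : Fin n × Fin n) := (P ij.1 ij.2).support
  let D := Finset.univ.biUnion supp
  let w (d : Fin 2 →₀ ℕ) : ℤ × ℤ := ((d 0 : ℤ) - N, (d 1 : ℤ) - N)
  let C (d : Fin 2 →₀ ℕ) : End ℂ V := Matrix.toLin b b (Matrix.of fun i j => (P i j).coeff d)
  have hC (z : ℂˣ) : (h z : End ℂ V) = ∑ d ∈ D, monomialChar (w d) z • C d := by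
    apply (LinearMap.toMatrix b b).injective
    ext i j
    have hsupp : (P i j).support ⊆ D := Finset.subset_biUnion_of_mem supp (Finset.mem_univ (i, j))
    rw [hP, MvPolynomial.eval_mul_zpow_eq_sum_monomialChar, map_sum, Matrix.sum_apply]
    simp only [map_smul, C, LinearMap.toMatrix_toLin, Matrix.smul_apply, Matrix.of_apply,
      smul_eq_mul, mul_comm]
    exact Finset.sum_subset hsupp fun d _ hd => by simp [MvPolynomial.notMem_support_iff.mp hd]
  refine ⟨D.image w, fun pq => ∑ d ∈ D with w d = pq, C d, fun z => ?_⟩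
  rw [hC, ← Finset.sum_fiberwise_of_maps_to (g := w) fun d hd => Finset.mem_image_of_mem w hd]
  simp only [Finset.smul_sum]
  exact Finset.sum_congr rfl fun pq _ => Finset.sum_congr rfl fun d hd => by
    rw [(Finset.mem_filter.mp hd).2]

theorem IsAlgebraicRep.iSup_weightSpace_eq_top (halg : IsAlgebraicRep h) :
    ⨆ pq : ℤ × ℤ, weightSpace h pq.1 pq.2 = ⊤ := by
  obtain ⟨S, A, hA⟩ := halg.exists_eq_sum_monomialChar_smul
  rw [eq_top_iff, ← iSup_iInf_eigenspace_eq_top_of_eq_sum_char_smul monomialChar_injective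
    (ρ := (Units.coeHom _).comp h) hA]
  exact iSup₂_le fun pq _ => le_iSup_of_le pq le_rfl

theorem add_eq_of_mem_weightSpace {k : ℤ}
    (hreal : ∀ (z : ℂˣ) (t : ℝ), 0 < t → (z : ℂ) = (t : ℂ) →
      (h z : V →ₗ[ℂ] V) = ((t : ℂ) ^ k) • LinearMap.id)
    {p q : ℤ} {v : V} (hv : v ∈ weightSpace h p q) (hv0 : v ≠ 0) : p + q = k := by
  let two : ℂˣ := Units.mk0 2 two_ne_zero
  have hev := End.mem_eigenspace_iff.mp ((Submodule.mem_iInf _).mp hv two)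
  rw [hreal two 2 two_pos (by simp [two])] at hev
  apply Complex.two_zpow_injective
  simpa [two, map_ofNat, ← zpow_add₀ (two_ne_zero (α := ℂ))] using
    (smul_left_injective ℂ hv0 hev).symm

end Representation

theorem algebraic_rep_weight_k_has_eigenvector_basis_general
    (V : Type*) [AddCommGroup V] [Module ℂ V] [FiniteDimensional ℂ V]
    (k : ℤ) (h : ℂˣ →* (V →ₗ[ℂ] V)ˣ)
    (halg : IsAlgebraicRep h)
    (hreal : ∀ (z : ℂˣ) (t : ℝ), 0 < t → (z : ℂ) = (t : ℂ) →
      (h z : V →ₗ[ℂ] V) = ((t : ℂ) ^ k) • LinearMap.id) :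
    ∃ (n : ℕ) (b : Module.Basis (Fin n) ℂ V),
      ∀ i : Fin n, ∃ p q : ℤ, p + q = k ∧ b i ∈ weightSpace h p q := by
  obtain ⟨n, b, hb⟩ := exists_basis_forall_mem_of_iSup_eq_top halg.iSup_weightSpace_eq_top
  refine ⟨n, b, fun i => ?_⟩
  obtain ⟨⟨p, q⟩, hpq⟩ := hb i
  exact ⟨p, q, add_eq_of_mem_weightSpace hreal hpq (b.ne_zero i), hpq⟩

theorem algebraic_rep_weight_k_has_eigenvector_basis
    (V : Type*) [AddCommGroup V] [Module ℂ V] [FiniteDimensional ℂ V]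
    (σ : V → V)
    (hσadd : ∀ x y : V, σ (x + y) = σ x + σ y)
    (hσsmul : ∀ (c : ℂ) (v : V), σ (c • v) = (starRingEnd ℂ c) • σ v)
    (hσinv : ∀ v : V, σ (σ v) = v)
    (k : ℤ) (h : ℂˣ →* (V →ₗ[ℂ] V)ˣ)
    (halg : IsAlgebraicRep h)
    (hcomm : ∀ (z : ℂˣ) (v : V), σ ((h z : V →ₗ[ℂ] V) v) = (h z : V →ₗ[ℂ] V) (σ v))
    (hreal : ∀ (z : ℂˣ) (t : ℝ), 0 < t → (z : ℂ) = (t : ℂ) →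
      (h z : V →ₗ[ℂ] V) = ((t : ℂ) ^ k) • LinearMap.id) :
    ∃ (n : ℕ) (b : Module.Basis (Fin n) ℂ V),
      ∀ i : Fin n, ∃ p q : ℤ, p + q = k ∧ b i ∈ weightSpace h p q :=
  algebraic_rep_weight_k_has_eigenvector_basis_general V k h halg hreal
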